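/- arXiv:1709.02234 — 2 statements merged into one kernel-verified Lean document; each statement's English description precedes it below -/
import Mathlib

section
/- Let j satisfy (H1), (H2), (H3) and let φ : [0,2π] → ℝ be continuous. Fix μ < 0 and define K(λ) = ∫₀^{2π}∫_ℝ (j')⁻¹( ((v²/2 + φ(θ) − λ)/μ)₊ ) dv dθ. Then K is strictly increasing on [min φ, +∞), K(λ) = 0 for λ ≤ min φ, lim_{λ → (min φ)⁺} K(λ) = 0, and lim_{λ→+∞} K(λ) = +∞. Consequently, for every M₁ > 0 there exists a unique λ > min φ with K(λ) = M₁. -/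
/-!
Put `G x = (j')⁻¹((x / -μ)₊)`, so that the inner integrand is `G (λ - φ θ - v² / 2)`. Call a
function a ramp if, like `x ↦ x₊`, it is continuous, vanishes on `(-∞, 0]`, is strictly
increasing on `[0, ∞)` and tends to `∞`. `G` is a ramp because `j'` is a strictly increasing
bijection of `[0, ∞)`, and `F a = ∫ G (a - v² / 2) dv` is again a ramp. Hence
`K λ = ∫ F (λ - φ θ) dθ` vanishes for `λ ≤ min φ`, is continuous, and is strictly increasing and
unbounded beyond `min φ`, which gives the unique multiplier by the intermediate value theorem.
-/

open Real Filter Set MeasureTheory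

theorem IsPreconnected.pos_of_ne_zero {s : Set ℝ} {f : ℝ → ℝ} (hs : IsPreconnected s)
    (hf : ContinuousOn f s) (hne : ∀ x ∈ s, f x ≠ 0) {x₀ : ℝ} (hx₀ : x₀ ∈ s) (h0 : 0 < f x₀)
    {x : ℝ} (hx : x ∈ s) : 0 < f x := by
  by_contra! hfx
  obtain ⟨y, hy, hfy⟩ := hs.intermediate_value hx hx₀ hf ⟨hfx, h0.le⟩
  exact hne y hy hfy

theorem MonotoneOn.strictMonoOn_rightInvOn {α β : Type*} [LinearOrder α] [LinearOrder β]
    {f : α → β} {g : β → α} {s : Set α} {t : Set β} (hf : MonotoneOn f s) (hg : MapsTo g t s)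
    (hgf : RightInvOn g f t) : StrictMonoOn g t := by
  intro x hx y hy hxy
  by_contra! hle
  have := hf (hg hy) (hg hx) hle
  rw [hgf hx, hgf hy] at this
  exact hxy.not_ge this

structure IsRamp (g : ℝ → ℝ) : Prop where
  continuous : Continuous g
  eq_zero_of_nonpos : ∀ x ≤ 0, g x = 0
  strictMonoOn : StrictMonoOn g (Ici 0)
  tendsto_atTop : Tendsto g atTop atTop

namespace IsRamp

variable {g : ℝ → ℝ}

theorem monotone (hg : IsRamp g) : Monotone g := by
  intro x y hxy
  rcases le_total 0 x with hx | hx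
  · exact hg.strictMonoOn.monotoneOn hx (hx.trans hxy) hxy
  rw [hg.eq_zero_of_nonpos x hx]
  rcases le_total y 0 with hy | hy
  · rw [hg.eq_zero_of_nonpos y hy]
  · rw [← hg.eq_zero_of_nonpos 0 le_rfl]
    exact hg.strictMonoOn.monotoneOn self_mem_Ici hy hy

theorem nonneg (hg : IsRamp g) (x : ℝ) : 0 ≤ g x :=
  hg.eq_zero_of_nonpos (min x 0) (min_le_right x 0) ▸ hg.monotone (min_le_left x 0)

theorem comp_div (hg : IsRamp g) {c : ℝ} (hc : 0 < c) : IsRamp fun x => g (x / c) where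
  continuous := hg.continuous.comp (continuous_id.div_const c)
  eq_zero_of_nonpos _ hx := hg.eq_zero_of_nonpos _ (div_nonpos_of_nonpos_of_nonneg hx hc.le)
  strictMonoOn _ hx _ hy hxy :=
    hg.strictMonoOn (div_nonneg hx hc.le) (div_nonneg hy hc.le) (div_lt_div_of_pos_right hxy hc)
  tendsto_atTop := hg.tendsto_atTop.comp (tendsto_id.atTop_div_const hc)

end IsRamp

section InverseOfDerivative

variable {f finv : ℝ → ℝ}

theorem pos_of_invOn_Ici (hf : ContinuousOn f (Ioi 0)) (hf0 : f 0 = 0)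
    (hfinv_nonneg : ∀ t ≥ 0, 0 ≤ finv t) (hright : ∀ t ≥ 0, f (finv t) = t)
    (hleft : ∀ s ≥ 0, finv (f s) = s) {s : ℝ} (hs : 0 < s) : 0 < f s := by
  have hfinv0 : finv 0 = 0 := by simpa [hf0] using hleft 0 le_rfl
  have hne : ∀ x ∈ Ioi (0 : ℝ), f x ≠ 0 := fun x hx hfx => by
    have := hleft x (le_of_lt hx)
    rw [hfx, hfinv0] at this
    exact (ne_of_gt hx) this.symm
  have hfinv1 : 0 < finv 1 := by
    refine (hfinv_nonneg 1 zero_le_one).lt_of_ne fun h => ?_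
    simpa [← h, hf0] using hright 1 zero_le_one
  exact isPreconnected_Ioi.pos_of_ne_zero hf hne hfinv1 (by simp [hright 1 zero_le_one]) hs

theorem isRamp_comp_max_zero (hf : ContinuousOn f (Ioi 0)) (hf_mono : StrictMonoOn f (Ioi 0))
    (hf0 : f 0 = 0) (hfinv_nonneg : ∀ t ≥ 0, 0 ≤ finv t) (hright : ∀ t ≥ 0, f (finv t) = t)
    (hleft : ∀ s ≥ 0, finv (f s) = s) : IsRamp fun x => finv (max x 0) := by
  have hfinv0 : finv 0 = 0 := by simpa [hf0] using hleft 0 le_rfl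
  have hf_nonneg {s : ℝ} (hs : 0 ≤ s) : 0 ≤ f s := by
    rcases hs.eq_or_lt with h | h
    · rw [← h, hf0]
    · exact (pos_of_invOn_Ici hf hf0 hfinv_nonneg hright hleft h).le
  have hf_monoOn : MonotoneOn f (Ici 0) := by
    intro x hx y hy hxy
    rcases (show (0 : ℝ) ≤ x from hx).eq_or_lt with h | h
    · rw [← h, hf0]
      exact hf_nonneg hy
    · exact hf_mono.monotoneOn h (h.trans_le hxy) hxy
  have hfinv_mono : StrictMonoOn finv (Ici 0) :=
    hf_monoOn.strictMonoOn_rightInvOn (fun t ht => hfinv_nonneg t ht) (fun t ht => hright t ht)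
  have hmono : Monotone fun x => finv (max x 0) := fun x y hxy =>
    hfinv_mono.monotoneOn (le_max_right x 0) (le_max_right y 0) (max_le_max_right 0 hxy)
  refine ⟨?_, fun x hx => by simp [max_eq_right hx, hfinv0], ?_, ?_⟩
  · -- adding `min x 0` turns `x ↦ finv (max x 0)` into a monotone surjection of `ℝ`
    have hsurj : Continuous fun x => finv (max x 0) + min x 0 := by
      refine (hmono.add fun x y hxy => min_le_min_right 0 hxy).continuous_of_surjective
        fun y => ?_
      rcases le_total 0 y with hy | hy
      · have hfy : 0 ≤ f y := hf_nonneg hy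
        exact ⟨f y, by simp [hfy, hleft y hy]⟩
      · exact ⟨y, by simp [hy, hfinv0]⟩
    exact (hsurj.sub (continuous_id.min continuous_const)).congr
      fun x => add_sub_cancel_right _ _
  · intro x hx y hy hxy
    simpa [max_eq_left (show (0 : ℝ) ≤ x from hx), max_eq_left (show (0 : ℝ) ≤ y from hy)]
      using hfinv_mono hx hy hxy
  · refine tendsto_atTop_atTop.2 fun s => ⟨f (max s 0), fun x hx => ?_⟩
    have hfs : 0 ≤ f (max s 0) := hf_nonneg (le_max_right s 0)
    calc s ≤ max s 0 := le_max_left s 0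
      _ = finv (f (max s 0)) := (hleft _ (le_max_right s 0)).symm
      _ ≤ finv (max x 0) :=
        hfinv_mono.monotoneOn hfs (le_max_right x 0) (hx.trans (le_max_left x 0))

end InverseOfDerivative

noncomputable def velocityIntegral (g : ℝ → ℝ) (a : ℝ) : ℝ := ∫ v : ℝ, g (a - v ^ 2 / 2)

namespace IsRamp

variable {g : ℝ → ℝ}

theorem integrable_comp_sub_sq (hg : IsRamp g) (a : ℝ) :
    Integrable fun v : ℝ => g (a - v ^ 2 / 2) := by
  refine (hg.continuous.comp (by fun_prop)).integrable_of_hasCompactSupport ?_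
  refine HasCompactSupport.intro (isCompact_Icc (a := -(|a| + 1)) (b := |a| + 1)) fun v hv => ?_
  have hv : |a| + 1 < |v| := not_le.mp (mt abs_le.mp hv)
  refine hg.eq_zero_of_nonpos _ ?_
  nlinarith [abs_nonneg a, le_abs_self a, sq_abs v]

theorem velocityIntegral_eq_zero (hg : IsRamp g) {a : ℝ} (ha : a ≤ 0) :
    velocityIntegral g a = 0 := by
  have h (v : ℝ) : g (a - v ^ 2 / 2) = 0 := hg.eq_zero_of_nonpos _ (by nlinarith [sq_nonneg v])
  simp [velocityIntegral, h]

theorem strictMonoOn_velocityIntegral (hg : IsRamp g) :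
    StrictMonoOn (velocityIntegral g) (Ici 0) := by
  intro a ha b hb hab
  have hpos : 0 < ∫ v : ℝ, (g (b - v ^ 2 / 2) - g (a - v ^ 2 / 2)) :=
    integral_pos_of_integrable_nonneg_nonzero (x := 0) (by have := hg.continuous; fun_prop)
      ((hg.integrable_comp_sub_sq b).sub (hg.integrable_comp_sub_sq a))
      (fun v => sub_nonneg.2 (hg.monotone (by linarith)))
      (by simpa using sub_ne_zero.2 (hg.strictMonoOn ha hb hab).ne')
  rw [integral_sub (hg.integrable_comp_sub_sq b) (hg.integrable_comp_sub_sq a)] at hpos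
  exact sub_pos.1 hpos

theorem continuous_velocityIntegral (hg : IsRamp g) : Continuous (velocityIntegral g) := by
  refine continuous_iff_continuousAt.2 fun a₀ => ?_
  refine continuousAt_of_dominated (bound := fun v => g (a₀ + 1 - v ^ 2 / 2))
    (Eventually.of_forall fun a => (hg.continuous.comp (by fun_prop)).aestronglyMeasurable) ?_
    (hg.integrable_comp_sub_sq _)
    (ae_of_all _ fun v => (hg.continuous.comp (by fun_prop)).continuousAt)
  filter_upwards [eventually_le_nhds (lt_add_one a₀)] with a ha
  exact ae_of_all _ fun v => by
    rw [Real.norm_of_nonneg (hg.nonneg _)]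
    exact hg.monotone (by linarith)

theorem tendsto_velocityIntegral_atTop (hg : IsRamp g) :
    Tendsto (velocityIntegral g) atTop atTop := by
  have hlow (a : ℝ) : 2 * g (a - 1 / 2) ≤ velocityIntegral g a :=
    calc 2 * g (a - 1 / 2) = ∫ _ in Icc (-1 : ℝ) 1, g (a - 1 / 2) := by norm_num
      _ ≤ ∫ v in Icc (-1 : ℝ) 1, g (a - v ^ 2 / 2) := by
        refine setIntegral_mono_on (integrableOn_const (by simp))
          (hg.integrable_comp_sub_sq a).integrableOn measurableSet_Icc fun v hv => ?_
        exact hg.monotone (by nlinarith [hv.1, hv.2])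
      _ ≤ velocityIntegral g a :=
        setIntegral_le_integral (hg.integrable_comp_sub_sq a) (ae_of_all _ fun v => hg.nonneg _)
  exact tendsto_atTop_mono hlow <| (hg.tendsto_atTop.comp
    (tendsto_atTop_add_const_right atTop _ tendsto_id)).const_mul_atTop two_pos

protected theorem velocityIntegral (hg : IsRamp g) : IsRamp (velocityIntegral g) where
  continuous := hg.continuous_velocityIntegral
  eq_zero_of_nonpos _ := hg.velocityIntegral_eq_zero
  strictMonoOn := hg.strictMonoOn_velocityIntegral
  tendsto_atTop := hg.tendsto_velocityIntegral_atTop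

end IsRamp

section AngularIntegral

variable {F φ : ℝ → ℝ} {a b m : ℝ}

theorem continuous_integral_comp_sub (hF : Continuous F) (hφ : ContinuousOn φ (Icc a b))
    (hab : a ≤ b) : Continuous fun lam => ∫ θ in a..b, F (lam - φ θ) := by
  -- replace `φ` by its continuous extension constant outside `[a, b]`
  set ψ : ℝ → ℝ := fun θ => φ (projIcc a b hab θ)
  have hψ : Continuous ψ :=
    hφ.comp_continuous (continuous_subtype_val.comp continuous_projIcc)
      fun θ => (projIcc a b hab θ).2
  have hφψ (lam : ℝ) : ∫ θ in a..b, F (lam - φ θ) = ∫ θ in a..b, F (lam - ψ θ) :=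
    intervalIntegral.integral_congr fun θ hθ => by
      rw [uIcc_of_le hab] at hθ
      simp [ψ, projIcc_of_mem hab hθ]
  simp_rw [hφψ]
  exact intervalIntegral.continuous_parametric_intervalIntegral_of_continuous' (by fun_prop) a b

theorem integral_comp_sub_eq_zero (hF : ∀ x ≤ 0, F x = 0) (hab : a ≤ b)
    (hm : m ∈ lowerBounds (φ '' Icc a b)) (lam : ℝ) (hlam : lam ≤ m) :
    ∫ θ in a..b, F (lam - φ θ) = 0 := by
  rw [intervalIntegral.integral_congr (g := fun _ => 0), intervalIntegral.integral_zero]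
  intro θ hθ
  rw [uIcc_of_le hab] at hθ
  exact hF _ (by linarith [hm (mem_image_of_mem φ hθ)])

theorem strictMonoOn_integral_comp_sub (hF : IsRamp F) (hφ : ContinuousOn φ (Icc a b))
    (hab : a < b) (hm : IsLeast (φ '' Icc a b) m) :
    StrictMonoOn (fun lam => ∫ θ in a..b, F (lam - φ θ)) (Ici m) := by
  obtain ⟨θ₀, hθ₀, hφθ₀⟩ := hm.1
  intro lam hlam lam' _ hlt
  refine intervalIntegral.integral_lt_integral_of_continuousOn_of_le_of_exists_lt hab
    (hF.continuous.comp_continuousOn (continuousOn_const.sub hφ))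
    (hF.continuous.comp_continuousOn (continuousOn_const.sub hφ))
    (fun θ _ => hF.monotone (by linarith)) ⟨θ₀, hθ₀, ?_⟩
  rw [hφθ₀]
  exact hF.strictMonoOn (mem_Ici.2 (sub_nonneg.2 hlam))
    (mem_Ici.2 (by linarith [mem_Ici.1 hlam])) (by linarith)

theorem tendsto_integral_comp_sub_atTop (hF : IsRamp F) (hφ : ContinuousOn φ (Icc a b))
    (hab : a < b) : Tendsto (fun lam => ∫ θ in a..b, F (lam - φ θ)) atTop atTop := by
  obtain ⟨B, hB⟩ := isCompact_Icc.bddAbove_image hφ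
  have hlow (lam : ℝ) : (b - a) * F (lam - B) ≤ ∫ θ in a..b, F (lam - φ θ) := by
    simpa using intervalIntegral.integral_mono_on (f := fun _ => F (lam - B))
      (g := fun θ => F (lam - φ θ)) (μ := volume) hab.le intervalIntegrable_const
      ((hF.continuous.comp_continuousOn (continuousOn_const.sub hφ)).intervalIntegrable_of_Icc
        hab.le)
      fun θ hθ => hF.monotone (by linarith [hB (mem_image_of_mem φ hθ)])
  exact tendsto_atTop_mono hlow <| (hF.tendsto_atTop.comp
    (tendsto_atTop_add_const_right atTop _ tendsto_id)).const_mul_atTop (sub_pos.2 hab)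

end AngularIntegral

theorem existsUnique_eq_of_strictMonoOn_Ici {K : ℝ → ℝ} {m M : ℝ}
    (hK : ContinuousOn K (Ici m)) (hK_mono : StrictMonoOn K (Ici m))
    (hK_top : Tendsto K atTop atTop) (hM : K m < M) :
    ∃! lam, m < lam ∧ K lam = M := by
  obtain ⟨R, hMR, hmR⟩ := ((hK_top.eventually_ge_atTop M).and (eventually_ge_atTop m)).exists
  obtain ⟨lam, hlam, hKlam⟩ :=
    intermediate_value_Icc hmR (hK.mono Icc_subset_Ici_self) ⟨hM.le, hMR⟩
  have hmlam : m < lam := hlam.1.lt_of_ne (by rintro rfl; exact hM.ne hKlam)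
  refine ⟨lam, ⟨hmlam, hKlam⟩, fun y ⟨hy, hKy⟩ => ?_⟩
  exact hK_mono.injOn (mem_Ici.2 hy.le) (mem_Ici.2 hmlam.le) (hKy.trans hKlam.symm)

theorem K_properties_and_unique_multiplier_general
    (j : ℝ → ℝ) (jinv : ℝ → ℝ) (φ : ℝ → ℝ) (μ m : ℝ) (K : ℝ → ℝ)
    (hC2 : ContDiffOn ℝ 2 j (Set.Ioi 0))
    (hj'0 : deriv j 0 = 0)
    (hj'' : ∀ t > 0, 0 < deriv (deriv j) t)
    (hjinv_nonneg : ∀ t ≥ (0:ℝ), 0 ≤ jinv t)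
    (hjinv_right : ∀ t ≥ (0:ℝ), deriv j (jinv t) = t)
    (hjinv_left : ∀ s ≥ (0:ℝ), jinv (deriv j s) = s)
    (hφ : ContinuousOn φ (Set.Icc 0 (2 * π)))
    (hμ : μ < 0)
    (hm : IsLeast (φ '' Set.Icc 0 (2 * π)) m)
    (hK : ∀ lam, K lam =
      ∫ θ in (0)..(2 * π), ∫ v : ℝ, jinv (max ((v ^ 2 / 2 + φ θ - lam) / μ) 0)) :
    StrictMonoOn K (Set.Ici m) ∧
    (∀ lam ≤ m, K lam = 0) ∧
    Tendsto K (nhdsWithin m (Set.Ioi m)) (nhds 0) ∧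
    Tendsto K atTop atTop ∧
    ∀ M₁ > (0:ℝ), ∃! lam : ℝ, m < lam ∧ K lam = M₁ := by
  have hj'_cont : ContinuousOn (deriv j) (Ioi 0) :=
    hC2.continuousOn_deriv_of_isOpen isOpen_Ioi (by norm_num)
  have hj'_mono : StrictMonoOn (deriv j) (Ioi 0) :=
    strictMonoOn_of_deriv_pos (convex_Ioi 0) hj'_cont (by simpa using hj'')
  set G : ℝ → ℝ := fun x => jinv (max (x / -μ) 0)
  have hF : IsRamp (velocityIntegral G) :=
    ((isRamp_comp_max_zero hj'_cont hj'_mono hj'0 hjinv_nonneg hjinv_right hjinv_left).comp_div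
      (neg_pos.2 hμ)).velocityIntegral
  obtain rfl : K = fun lam => ∫ θ in (0)..(2 * π), velocityIntegral G (lam - φ θ) := by
    funext lam
    simp only [hK, velocityIntegral, G]
    congr! 4 with θ v
    rw [← neg_div_neg_eq]
    ring_nf
  have hπ : (0 : ℝ) < 2 * π := by positivity
  have hK_cont := continuous_integral_comp_sub hF.continuous hφ hπ.le
  have hK_zero := integral_comp_sub_eq_zero hF.eq_zero_of_nonpos hπ.le hm.2
  have hK_mono := strictMonoOn_integral_comp_sub hF hφ hπ hm
  have hK_top := tendsto_integral_comp_sub_atTop hF hφ hπ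
  refine ⟨hK_mono, hK_zero, ?_, hK_top, fun M₁ hM₁ =>
    existsUnique_eq_of_strictMonoOn_Ici hK_cont.continuousOn hK_mono hK_top ?_⟩
  · simpa [hK_zero m le_rfl] using (hK_cont.tendsto m).mono_left nhdsWithin_le_nhds
  · simpa [hK_zero m le_rfl] using hM₁

/-- Properties of `K(λ) = ∬ (j')⁻¹( ((v²/2 + φ(θ) − λ)/μ)₊ )` and existence/uniqueness of the
Lagrange multiplier `λ` realizing a prescribed mass `M₁`. -/
theorem K_properties_and_unique_multiplier
    (j : ℝ → ℝ) (p q : ℝ) (jinv : ℝ → ℝ) (φ : ℝ → ℝ) (μ m : ℝ) (K : ℝ → ℝ)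
    (hC2 : ContDiffOn ℝ 2 j (Set.Ioi 0))
    (hj0 : j 0 = 0) (hj'0 : deriv j 0 = 0)
    (hj'' : ∀ t > 0, 0 < deriv (deriv j) t)
    (hH2 : Tendsto (fun t => j t / t) atTop atTop)
    (hp : 1 < p) (hq : 1 < q)
    (hH3 : ∀ s > 0, p ≤ s * deriv j s / j s ∧ s * deriv j s / j s ≤ q)
    (hjinv_nonneg : ∀ t ≥ (0:ℝ), 0 ≤ jinv t)
    (hjinv_right : ∀ t ≥ (0:ℝ), deriv j (jinv t) = t)
    (hjinv_left : ∀ s ≥ (0:ℝ), jinv (deriv j s) = s)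
    (hφ : ContinuousOn φ (Set.Icc 0 (2 * π)))
    (hμ : μ < 0)
    (hm : IsLeast (φ '' Set.Icc 0 (2 * π)) m)
    (hK : ∀ lam, K lam =
      ∫ θ in (0)..(2 * π), ∫ v : ℝ, jinv (max ((v ^ 2 / 2 + φ θ - lam) / μ) 0)) :
    StrictMonoOn K (Set.Ici m) ∧
    (∀ lam ≤ m, K lam = 0) ∧
    Tendsto K (nhdsWithin m (Set.Ioi m)) (nhds 0) ∧
    Tendsto K atTop atTop ∧
    ∀ M₁ > (0:ℝ), ∃! lam : ℝ, m < lam ∧ K lam = M₁ :=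
  K_properties_and_unique_multiplier_general j jinv φ μ m K hC2 hj'0 hj'' hjinv_nonneg hjinv_right
    hjinv_left hφ hμ hm hK
end

section
/- Let j satisfy (H1)–(H2) or j(t) = t ln t, and let M > 0. Then the infimum I(M) = inf{ H(f) + ∬ j(f) : f ∈ E_j, ‖f‖_{L¹} = M } is finite; more precisely, for every admissible f, H(f) + ∬ j(f) ≥ −π ‖W'‖²_{L∞} M² + c(M), where c(M) = 0 if j ≥ 0 (case (H1)-(H2)) and c(M) = M(ln M − ln ∬ e^{−v²/2} dθ dv) if j(t) = t ln t. -/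
/-!
The field energy is bounded independently of the Casimir: the potential `φd = W' ∗ ρ` satisfies
`|φd| ≤ ‖W'‖_∞ M` because the spatial density `ρ` has mass `M`, so
`½ ∫₀^{2π} φd² ≤ π ‖W'‖²_∞ M²`, while the kinetic energy is nonnegative. When `j ≥ 0` this is the
whole argument. For `j(t) = t log t` the kinetic energy is absorbed by the entropy instead:
integrating the pointwise inequality `t log t ≥ t h + t - eʰ` against `f` with
`h = log (M / Z) - v² / 2` (Gibbs' inequality against the Maxwellian `(M / Z) e^{-v²/2}`) gives
`∬ (v² / 2) f + ∬ f log f ≥ M (log M - log Z)`.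
-/

open Real MeasureTheory Set

lemma mul_add_sub_exp_le_mul_log {t : ℝ} (ht : 0 ≤ t) (h : ℝ) :
    t * h + t - exp h ≤ t * log t := by
  rcases ht.eq_or_lt with rfl | ht
  · simpa using (exp_pos h).le
  · have key := add_one_le_exp (h - log t)
    rw [exp_sub, exp_log ht, le_div_iff₀ ht] at key
    linarith

namespace MeasureTheory

section Integration

variable {α : Type*} [MeasurableSpace α] {μ : Measure α}

lemma Integrable.mul_of_abs_le_weight {w u f : α → ℝ} (hwf : Integrable (fun x => w x * f x) μ)
    (hw : Measurable w) (hu : Measurable u) (hw0 : ∀ x, 0 < w x) (huw : ∀ x, |u x| ≤ w x) :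
    Integrable (fun x => u x * f x) μ := by
  refine (hwf.bdd_mul (c := 1) (hu.div hw).aestronglyMeasurable
    (ae_of_all _ fun x => ?_)).congr (ae_of_all _ fun x => ?_)
  · rw [Pi.div_apply, norm_div, Real.norm_eq_abs, Real.norm_eq_abs, abs_of_pos (hw0 x)]
    exact div_le_one_of_le₀ (huw x) (hw0 x).le
  · simp only [Pi.div_apply]
    field_simp [(hw0 x).ne']

lemma abs_integral_mul_le {g ρ : α → ℝ} {C : ℝ} (hg : ∀ x, |g x| ≤ C) (hρ0 : ∀ x, 0 ≤ ρ x)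
    (hρ : Integrable ρ μ) : |∫ x, g x * ρ x ∂μ| ≤ C * ∫ x, ρ x ∂μ := by
  rw [← integral_const_mul]
  refine norm_integral_le_of_norm_le (f := fun x => g x * ρ x) (hρ.const_mul C)
    (ae_of_all _ fun x => ?_)
  rw [Real.norm_eq_abs, abs_mul, abs_of_nonneg (hρ0 x)]
  exact mul_le_mul_of_nonneg_right (hg x) (hρ0 x)

lemma mul_log_sub_log_le_integral_mul_add_integral_mul_log {f V : α → ℝ} {M Z : ℝ}
    (hf0 : ∀ x, 0 ≤ f x) (hf : Integrable f μ) (hVf : Integrable (fun x => V x * f x) μ)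
    (hflog : Integrable (fun x => f x * log (f x)) μ) (hexp : Integrable (fun x => exp (-V x)) μ)
    (hM : 0 < M) (hmass : ∫ x, f x ∂μ = M) (hZ : ∫ x, exp (-V x) ∂μ = Z) (hZ0 : 0 < Z) :
    M * (log M - log Z) ≤ ∫ x, V x * f x ∂μ + ∫ x, f x * log (f x) ∂μ := by
  set c := log (M / Z)
  have hpt : ∀ x, c * f x - V x * f x + f x - M / Z * exp (-V x) ≤ f x * log (f x) := fun x => by
    have := mul_add_sub_exp_le_mul_log (hf0 x) (c - V x)
    rw [sub_eq_add_neg c, exp_add, exp_log (div_pos hM hZ0)] at this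
    linarith
  have hcV : Integrable (fun x => c * f x - V x * f x) μ := (hf.const_mul c).sub hVf
  have hcVf : Integrable (fun x => c * f x - V x * f x + f x) μ := hcV.add hf
  have hlower : Integrable (fun x => c * f x - V x * f x + f x - M / Z * exp (-V x)) μ :=
    hcVf.sub (hexp.const_mul _)
  have hint : ∫ x, (c * f x - V x * f x + f x - M / Z * exp (-V x)) ∂μ
      = c * M - ∫ x, V x * f x ∂μ + M - M / Z * Z := by
    rw [integral_sub hcVf (hexp.const_mul _), integral_add hcV hf,
      integral_sub (hf.const_mul c) hVf, integral_const_mul, integral_const_mul, hmass, hZ]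
  have hgibbs := integral_mono hlower hflog hpt
  rw [hint, div_mul_cancel₀ M hZ0.ne'] at hgibbs
  rw [← log_div hM.ne' hZ0.ne']
  linarith

end Integration

lemma Integrable.mul_of_abs_le_one_add_sq {α : Type*} [MeasurableSpace α] {μ : Measure (α × ℝ)}
    {u f : α × ℝ → ℝ} (hf : Integrable (fun p => (1 + p.2 ^ 2) * f p) μ) (hu : Measurable u)
    (hle : ∀ p, |u p| ≤ 1 + p.2 ^ 2) : Integrable (fun p => u p * f p) μ :=
  hf.mul_of_abs_le_weight (by fun_prop) hu (fun p => by positivity) hle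

section Product

variable {α β E : Type*} [MeasurableSpace α] [MeasurableSpace β] [NormedAddCommGroup E]
  {μ : Measure α} {ν : Measure β} [SFinite μ] [SFinite ν] {s : Set α}

lemma Integrable.integrableOn_prod_univ_comp_snd {g : β → E} (hg : Integrable g ν) (hs : μ s ≠ ⊤) :
    IntegrableOn (fun p : α × β => g p.2) (s ×ˢ univ) (μ.prod ν) := by
  have : IsFiniteMeasure (μ.restrict s) := isFiniteMeasure_restrict.mpr hs
  rw [IntegrableOn, ← Measure.prod_restrict, Measure.restrict_univ]
  exact hg.comp_snd _

variable [NormedSpace ℝ E]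

lemma setIntegral_prod_univ {f : α × β → E} (hf : IntegrableOn f (s ×ˢ univ) (μ.prod ν)) :
    ∫ p in s ×ˢ univ, f p ∂μ.prod ν = ∫ x in s, ∫ y, f (x, y) ∂ν ∂μ := by
  simpa using setIntegral_prod f hf

lemma IntegrableOn.integral_prod_univ_left {f : α × β → E}
    (hf : IntegrableOn f (s ×ˢ univ) (μ.prod ν)) :
    IntegrableOn (fun x => ∫ y, f (x, y) ∂ν) s μ := by
  rw [IntegrableOn, ← Measure.prod_restrict, Measure.restrict_univ] at hf
  exact hf.integral_prod_left

lemma setIntegral_prod_univ_comp_snd (g : β → E) (s : Set α) :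
    ∫ p in s ×ˢ univ, g p.2 ∂μ.prod ν = μ.real s • ∫ y, g y ∂ν := by
  rw [← Measure.prod_restrict, Measure.restrict_univ, integral_fun_snd,
    measureReal_restrict_apply_univ]

end Product

end MeasureTheory

lemma abs_intervalIntegral_mul_le {g ρ : ℝ → ℝ} {C a b : ℝ} (hab : a ≤ b) (hg : ∀ x, |g x| ≤ C)
    (hρ0 : ∀ x, 0 ≤ ρ x) (hρ : IntegrableOn ρ (Icc a b)) :
    |∫ x in a..b, g x * ρ x| ≤ C * ∫ x in Icc a b, ρ x := by
  rw [intervalIntegral.integral_of_le hab, integral_Icc_eq_integral_Ioc]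
  exact abs_integral_mul_le hg hρ0 (hρ.mono_set Ioc_subset_Icc_self)

lemma abs_intervalIntegral_mul_marginal_le {g : ℝ → ℝ} {f : ℝ × ℝ → ℝ} {C a b : ℝ} (hab : a ≤ b)
    (hg : ∀ x, |g x| ≤ C) (hf0 : ∀ p, 0 ≤ f p) (hf : IntegrableOn f (Icc a b ×ˢ univ)) :
    |∫ x in a..b, g x * ∫ v, f (x, v)| ≤ C * ∫ p in Icc a b ×ˢ univ, f p := by
  refine (abs_intervalIntegral_mul_le hab hg (fun x => integral_nonneg fun v => hf0 _)
    hf.integral_prod_univ_left).trans_eq ?_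
  rw [← setIntegral_prod_univ hf]
  rfl

lemma intervalIntegral_sq_le {φ : ℝ → ℝ} {B a b : ℝ} (hab : a ≤ b) (hφ : ∀ x, |φ x| ≤ B) :
    ∫ x in a..b, φ x ^ 2 ≤ (b - a) * B ^ 2 := by
  have hbound := intervalIntegral.norm_integral_le_of_norm_le_const (a := a) (b := b)
    (f := fun x => φ x ^ 2) fun x _ => by
      rw [norm_pow, Real.norm_eq_abs]
      exact pow_le_pow_left₀ (abs_nonneg _) (hφ x) 2
  rw [abs_of_nonneg (sub_nonneg.2 hab), Real.norm_eq_abs] at hbound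
  linarith [le_abs_self (∫ x in a..b, φ x ^ 2)]

lemma exp_neg_sq_div_two_eq (v : ℝ) : exp (-(v ^ 2 / 2)) = exp (-(1 / 2) * v ^ 2) := by
  ring_nf

lemma integrable_exp_neg_sq_div_two : Integrable fun v : ℝ => exp (-(v ^ 2 / 2)) := by
  simpa only [exp_neg_sq_div_two_eq] using integrable_exp_neg_mul_sq one_half_pos

lemma integral_exp_neg_sq_div_two : ∫ v : ℝ, exp (-(v ^ 2 / 2)) = √(2 * π) := by
  simp only [exp_neg_sq_div_two_eq, integral_gaussian]
  ring_nf

lemma setIntegral_Icc_prod_univ_exp_neg_sq_div_two {a b : ℝ} (hab : a ≤ b) :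
    ∫ p in Icc a b ×ˢ univ, exp (-(p.2 ^ 2 / 2)) = (b - a) * √(2 * π) := by
  rw [Measure.volume_eq_prod, setIntegral_prod_univ_comp_snd (fun v => exp (-(v ^ 2 / 2))),
    integral_exp_neg_sq_div_two, Real.volume_real_Icc_of_le hab, smul_eq_mul]

theorem energy_casimir_lower_bound_general (j : ℝ → ℝ) (W' : ℝ → ℝ) (CW' : ℝ) (M Z c : ℝ)
    (f : ℝ × ℝ → ℝ) (ρ φd : ℝ → ℝ)
    (hW'bdd : ∀ x, |W' x| ≤ CW')
    (hZ : Z = ∫ p in Set.Icc 0 (2 * π) ×ˢ (Set.univ : Set ℝ), Real.exp (-p.2 ^ 2 / 2))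
    (hcase : ((∀ t ≥ (0:ℝ), 0 ≤ j t) ∧ c = 0) ∨
      ((j = fun t => t * Real.log t) ∧ c = M * (Real.log M - Real.log Z)))
    (hf0 : ∀ p, 0 ≤ f p)
    (hfint : IntegrableOn (fun p => (1 + p.2 ^ 2) * f p)
      (Set.Icc 0 (2 * π) ×ˢ (Set.univ : Set ℝ)))
    (hjfint : IntegrableOn (fun p => j (f p)) (Set.Icc 0 (2 * π) ×ˢ (Set.univ : Set ℝ)))
    (hM : 0 < M)
    (hmass : (∫ p in Set.Icc 0 (2 * π) ×ˢ (Set.univ : Set ℝ), f p) = M)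
    (hρ : ∀ θ', ρ θ' = ∫ v, f (θ', v))
    (hφd : ∀ θ, φd θ = ∫ θ' in (0)..(2 * π), W' (θ - θ') * ρ θ') :
    -π * CW' ^ 2 * M ^ 2 + c ≤
      (∫ p in Set.Icc 0 (2 * π) ×ˢ (Set.univ : Set ℝ), p.2 ^ 2 / 2 * f p) -
        (1 / 2) * (∫ θ in (0)..(2 * π), (φd θ) ^ 2) +
        ∫ p in Set.Icc 0 (2 * π) ×ˢ (Set.univ : Set ℝ), j (f p) := by
  have h2π : (0 : ℝ) ≤ 2 * π := by positivity
  have hZ' : ∫ p in Icc 0 (2 * π) ×ˢ univ, exp (-(p.2 ^ 2 / 2)) = Z := by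
    simp_rw [← neg_div]; exact hZ.symm
  have hZ0 : 0 < Z := by
    rw [← hZ', setIntegral_Icc_prod_univ_exp_neg_sq_div_two h2π, sub_zero]; positivity
  set S : Set (ℝ × ℝ) := Icc 0 (2 * π) ×ˢ univ
  have hS : MeasurableSet S := measurableSet_Icc.prod .univ
  have hfS : IntegrableOn f S := by
    have h := hfint.mul_of_abs_le_one_add_sq (u := fun _ => 1) measurable_const fun p => by
      simpa using sq_nonneg p.2
    simp only [one_mul] at h
    exact h
  have hkin : IntegrableOn (fun p => p.2 ^ 2 / 2 * f p) S :=
    hfint.mul_of_abs_le_one_add_sq (by fun_prop) fun p => by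
      rw [abs_of_nonneg (by positivity)]; linarith [sq_nonneg p.2]
  have hpot : ∫ θ in 0..2 * π, φd θ ^ 2 ≤ (2 * π - 0) * (CW' * M) ^ 2 :=
    intervalIntegral_sq_le h2π fun θ => by
      simp_rw [hφd, hρ, ← hmass]
      exact abs_intervalIntegral_mul_marginal_le h2π (fun _ => hW'bdd _) hf0 hfS
  have hkin0 : 0 ≤ ∫ p in S, p.2 ^ 2 / 2 * f p :=
    setIntegral_nonneg hS fun p _ => mul_nonneg (by positivity) (hf0 p)
  rcases hcase with ⟨hj0, rfl⟩ | ⟨rfl, rfl⟩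
  · have : 0 ≤ ∫ p in S, j (f p) := setIntegral_nonneg hS fun p _ => hj0 _ (hf0 p)
    linarith
  · have := mul_log_sub_log_le_integral_mul_add_integral_mul_log hf0 hfS hkin hjfint
      (integrable_exp_neg_sq_div_two.integrableOn_prod_univ_comp_snd measure_Icc_lt_top.ne)
      hM hmass hZ' hZ0
    linarith

/-- Lower bound on the energy–Casimir functional: for every admissible `f` of mass `M`,
`H(f) + ∬ j(f) ≥ −π ‖W'‖²_{L∞} M² + c(M)`, with `c(M) = 0` when `j ≥ 0` and
`c(M) = M(ln M − ln ∬ e^{−v²/2})` when `j(t) = t ln t`. In particular `I(M) > −∞`. -/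
theorem energy_casimir_lower_bound (j : ℝ → ℝ) (W' : ℝ → ℝ) (CW' : ℝ) (M Z c : ℝ)
    (f : ℝ × ℝ → ℝ) (ρ φd : ℝ → ℝ)
    (hW'bdd : ∀ x, |W' x| ≤ CW') (hCW' : 0 ≤ CW')
    (hZ : Z = ∫ p in Set.Icc 0 (2 * π) ×ˢ (Set.univ : Set ℝ), Real.exp (-p.2 ^ 2 / 2))
    (hcase : ((∀ t ≥ (0:ℝ), 0 ≤ j t) ∧ c = 0) ∨
      ((j = fun t => t * Real.log t) ∧ c = M * (Real.log M - Real.log Z)))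
    (hf0 : ∀ p, 0 ≤ f p)
    (hfint : IntegrableOn (fun p => (1 + p.2 ^ 2) * f p)
      (Set.Icc 0 (2 * π) ×ˢ (Set.univ : Set ℝ)))
    (hjfint : IntegrableOn (fun p => j (f p)) (Set.Icc 0 (2 * π) ×ˢ (Set.univ : Set ℝ)))
    (hM : 0 < M)
    (hmass : (∫ p in Set.Icc 0 (2 * π) ×ˢ (Set.univ : Set ℝ), f p) = M)
    (hρ : ∀ θ', ρ θ' = ∫ v, f (θ', v))
    (hφd : ∀ θ, φd θ = ∫ θ' in (0)..(2 * π), W' (θ - θ') * ρ θ') :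
    -π * CW' ^ 2 * M ^ 2 + c ≤
      (∫ p in Set.Icc 0 (2 * π) ×ˢ (Set.univ : Set ℝ), p.2 ^ 2 / 2 * f p) -
        (1 / 2) * (∫ θ in (0)..(2 * π), (φd θ) ^ 2) +
        ∫ p in Set.Icc 0 (2 * π) ×ˢ (Set.univ : Set ℝ), j (f p) :=
  energy_casimir_lower_bound_general j W' CW' M Z c f ρ φd hW'bdd hZ hcase hf0 hfint hjfint hM hmass
    hρ hφd
end
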